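/- arXiv:2308.09696 — 2 statements merged into one kernel-verified Lean document; each statement's English description precedes it below -/
import Mathlib

section
/- For n ≥ 5, the set of all n singletons {1}, ..., {n} is a resolving set of the inclusion graph on nonempty proper subsets of {1,...,n}; hence its metric dimension is at most n. -/
open SimpleGraph Finset

variable {V : Type*}

/-- A set of vertices is resolving if distance vectors to it distinguish vertices. -/
def IsResolving (G : SimpleGraph V) (S : Set V) : Prop :=
  ∀ u v : V, (∀ w ∈ S, G.dist u w = G.dist v w) → u = v

/-- The metric dimension: the least size of a (finite) resolving set. -/
noncomputable def metricDim (G : SimpleGraph V) : ℕ :=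
  sInf {k | ∃ S : Finset V, S.card = k ∧ IsResolving G ↑S}

/-- Two vertices are mutually maximally distant. -/
def MMD (G : SimpleGraph V) (u v : V) : Prop :=
  u ≠ v ∧ (∀ w, G.Adj u w → G.dist v w ≤ G.dist u v) ∧
    (∀ w, G.Adj v w → G.dist u w ≤ G.dist u v)

/-- The strong resolving graph: edges between mutually maximally distant vertices. -/
def strongResolvingGraph (G : SimpleGraph V) : SimpleGraph V where
  Adj u v := MMD G u v
  symm := by
    refine ⟨?_⟩
    rintro u v ⟨hne, h1, h2⟩
    refine ⟨hne.symm, ?_, ?_⟩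
    · intro w hw
      rw [SimpleGraph.dist_comm (u := v) (v := u)]
      exact h2 w hw
    · intro w hw
      rw [SimpleGraph.dist_comm (u := v) (v := u)]
      exact h1 w hw
  loopless := ⟨fun v h => h.1 rfl⟩

/-- A set strongly resolving a graph. -/
def IsStrongResolving (G : SimpleGraph V) (S : Set V) : Prop :=
  ∀ u v : V, u ≠ v → ∃ w ∈ S,
    G.dist w u = G.dist w v + G.dist v u ∨ G.dist w v = G.dist w u + G.dist u v

/-- Strong metric dimension. -/
noncomputable def sdim (G : SimpleGraph V) : ℕ :=
  sInf {k | ∃ S : Finset V, S.card = k ∧ IsStrongResolving G ↑S}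

/-- An independent set of vertices. -/
def IsIndepFinset (G : SimpleGraph V) (S : Finset V) : Prop :=
  ∀ u ∈ S, ∀ v ∈ S, u ≠ v → ¬ G.Adj u v

/-- Independence number. -/
noncomputable def indepNum (G : SimpleGraph V) : ℕ :=
  sSup {k | ∃ S : Finset V, S.card = k ∧ IsIndepFinset G S}

/-- Vertices of the inclusion graph on `{1,...,n}`: nonempty proper subsets. -/
def SubVert (n : ℕ) := {A : Finset (Fin n) // A.Nonempty ∧ A ≠ Finset.univ}

/-- The inclusion graph on nonempty proper subsets of `{1,...,n}`. -/
def inclGraph (n : ℕ) : SimpleGraph (SubVert n) where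
  Adj A B := A.1 ⊂ B.1 ∨ B.1 ⊂ A.1
  symm := ⟨fun _ _ h => h.symm⟩
  loopless := ⟨fun A h => by
    rcases h with h | h <;> exact (ssubset_irrefl A.1) h⟩

/-- Complement of a vertex of the inclusion graph. -/
def complVert {n : ℕ} (A : SubVert n) : SubVert n :=
  ⟨A.1ᶜ,
    Finset.nonempty_iff_ne_empty.mpr fun h => A.2.2 (by simpa using h),
    fun h => (Finset.nonempty_iff_ne_empty.mp A.2.1) (by simpa using h)⟩

/-- Vertices of the inclusion ideal graph of a product of chain rings:
tuples in a product of chains, excluding bottom and top. -/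
def ChainVert {m : ℕ} (d : Fin m → ℕ) := {v : ∀ i, Fin (d i + 2) // v ≠ ⊥ ∧ v ≠ ⊤}

/-- The inclusion graph on a product of chains (minus bottom and top),
modelling the inclusion ideal graph of a product of principal ideal rings. -/
def chainGraph {m : ℕ} (d : Fin m → ℕ) : SimpleGraph (ChainVert d) where
  Adj I J := I.1 < J.1 ∨ J.1 < I.1
  symm := ⟨fun _ _ h => h.symm⟩
  loopless := ⟨fun I h => by rcases h with h | h <;> exact lt_irrefl _ h⟩

/-!
A vertex `A` is at distance at most one from the singleton `{i}` exactly when `i ∈ A`: either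
`A = {i}` or `{i} ⊂ A`, while a vertex not containing `i` is neither equal nor adjacent to `{i}`.
Since `dist` is `0` between unreachable vertices, the last step needs connectivity, which holds
once `n ≥ 3` (two singletons `{a}`, `{b}` are joined through the proper subset `{a, b}`).
So the distances to the singletons determine `A`.
-/

lemma metricDim_le_card {G : SimpleGraph V} {S : Finset V} (hS : IsResolving G S) :
    metricDim G ≤ S.card :=
  Nat.sInf_le ⟨S, rfl, hS⟩

namespace SubVert

variable {n : ℕ}

def ofCardLt (s : Finset (Fin n)) (hs : s.Nonempty) (hcard : s.card < n) : SubVert n :=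
  ⟨s, hs, fun h => by simp [h] at hcard⟩

@[simp]
lemma val_ofCardLt (s : Finset (Fin n)) (hs : s.Nonempty) (hcard : s.card < n) :
    (ofCardLt s hs hcard).1 = s :=
  rfl

def single (hn : 1 < n) (i : Fin n) : SubVert n :=
  ofCardLt {i} (singleton_nonempty i) (by simpa using hn)

@[simp]
lemma val_single (hn : 1 < n) (i : Fin n) : (single hn i).1 = {i} :=
  rfl

end SubVert

namespace inclGraph

variable {n : ℕ}

lemma reachable_of_subset {A B : SubVert n} (h : A.1 ⊆ B.1) : (inclGraph n).Reachable A B := by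
  rcases h.eq_or_ssubset with h | h
  · rw [Subtype.ext h]
  · exact Adj.reachable (Or.inl h)

lemma reachable_of_common_subset {A B C : SubVert n} (hA : C.1 ⊆ A.1) (hB : C.1 ⊆ B.1) :
    (inclGraph n).Reachable A B :=
  (reachable_of_subset hA).symm.trans (reachable_of_subset hB)

lemma preconnected (hn : 2 < n) : (inclGraph n).Preconnected := by
  intro A B
  obtain ⟨a, ha⟩ := A.2.1
  obtain ⟨b, hb⟩ := B.2.1
  have h1 : 1 < n := by omega
  let P := SubVert.ofCardLt {a, b} (insert_nonempty _ _) (card_le_two.trans_lt hn)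
  have hAP : (inclGraph n).Reachable A P :=
    reachable_of_common_subset (C := SubVert.single h1 a) (by simpa) (by simp [P])
  have hPB : (inclGraph n).Reachable P B :=
    reachable_of_common_subset (C := SubVert.single h1 b) (by simp [P]) (by simpa)
  exact hAP.trans hPB

lemma mem_iff_dist_single_le_one (hn : 2 < n) (A : SubVert n) (i : Fin n) :
    i ∈ A.1 ↔ (inclGraph n).dist A (SubVert.single (one_lt_two.trans hn) i) ≤ 1 := by
  set I := SubVert.single (one_lt_two.trans hn) i
  constructor
  · intro hi
    rcases (singleton_subset_iff.2 hi).eq_or_ssubset with h | h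
    · simp [← Subtype.ext (a1 := I) h]
    · exact (dist_eq_one_iff_adj.2 (Or.inr h)).le
  · intro hd
    rcases Nat.le_one_iff_eq_zero_or_eq_one.1 hd with h | h
    · obtain rfl | hAI := dist_eq_zero_iff_eq_or_not_reachable.1 h
      · simp [I]
      · exact absurd (preconnected hn A I) hAI
    · rcases dist_eq_one_iff_adj.1 h with hAI | hIA
      · exact absurd (ssubset_singleton_iff.1 hAI) A.2.1.ne_empty
      · exact singleton_subset_iff.1 hIA.subset

lemma isResolving_singletons (hn : 2 < n) :
    IsResolving (inclGraph n) {A : SubVert n | ∃ i : Fin n, A.1 = {i}} := by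
  intro A B h
  refine Subtype.ext (Finset.ext fun i => ?_)
  rw [mem_iff_dist_single_le_one hn, mem_iff_dist_single_le_one hn, h _ ⟨i, rfl⟩]

end inclGraph

theorem stmt5 (n : ℕ) (hn : 5 ≤ n) :
    IsResolving (inclGraph n) {A : SubVert n | ∃ i : Fin n, A.1 = {i}} ∧
      metricDim (inclGraph n) ≤ n := by
  have hres := inclGraph.isResolving_singletons (n := n) (by omega)
  refine ⟨hres, ?_⟩
  classical
  let S := univ.image (SubVert.single (n := n) (by omega))
  have hS : (S : Set (SubVert n)) = {A : SubVert n | ∃ i : Fin n, A.1 = {i}} := by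
    ext A
    simp only [S, coe_image, coe_univ, Set.image_univ, Set.mem_range, Set.mem_ofPred]
    exact ⟨fun ⟨i, hi⟩ => ⟨i, hi ▸ rfl⟩, fun ⟨i, hi⟩ => ⟨i, Subtype.ext hi.symm⟩⟩
  calc metricDim (inclGraph n) ≤ S.card := metricDim_le_card (by rwa [hS])
    _ ≤ n := card_image_le.trans (by simp)
end

section
/- For n ≥ 3 and distinct nonempty proper subsets A, B of {1,...,n}, the vertices A and B are mutually maximally distant in the inclusion graph G_n if and only if B = A^c, or (A, B are incomparable under inclusion and A, B^c are incomparable under inclusion). -/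
open SimpleGraph Finset

variable {V : Type*}

/-! In `G_n` distances are read off from inclusions: comparable sets are adjacent, two
incomparable sets other than `A, Aᶜ` have the common neighbour `A ∩ B` or `A ∪ B`, and
`d(A, Aᶜ) = 3` because every neighbour of `A` is incomparable with `Aᶜ` (and `A` has a neighbour
as soon as `n ≥ 3`). Hence `A, Aᶜ` are mutually maximally distant. If `A ⊊ B`, then
`A ∪ {y}` with `y ∉ B` is a neighbour of `A` at distance 2 from `B`. If `A, B` are incomparable
and `B ≠ Aᶜ`, then `d(A, B) = 2` and the only neighbour of `A` that can lie farther from `B`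
is `Bᶜ`, which is a neighbour exactly when `A` and `Bᶜ` are comparable. -/

namespace SimpleGraph

variable {G : SimpleGraph V} {u v : V}

lemma dist_eq_two_iff :
    G.dist u v = 2 ↔ u ≠ v ∧ ¬G.Adj u v ∧ (G.commonNeighbors u v).Nonempty := by
  constructor
  · intro h
    have hr : G.Reachable u v := Reachable.of_dist_ne_zero (by omega)
    rw [← edist_eq_two_iff, ← hr.coe_dist_eq_edist, h]
    rfl
  · intro h
    obtain ⟨w, hw⟩ := h.2.2
    rw [mem_commonNeighbors] at hw
    have hr : G.Reachable u v := hw.1.reachable.trans hw.2.reachable.symm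
    exact_mod_cast hr.coe_dist_eq_edist.trans (edist_eq_two_iff.mpr h)

lemma Reachable.three_le_dist (hr : G.Reachable u v) (hne : u ≠ v) (hadj : ¬G.Adj u v)
    (hc : G.commonNeighbors u v = ∅) : 3 ≤ G.dist u v := by
  have h := two_lt_edist_iff.mpr ⟨hne, hadj, hc⟩
  rw [← hr.coe_dist_eq_edist] at h
  exact_mod_cast h

end SimpleGraph

lemma MMD.symm {G : SimpleGraph V} {u v : V} (h : MMD G u v) : MMD G v u :=
  Adj.symm (G := strongResolvingGraph G) h

namespace inclGraph

variable {n : ℕ} {A B W : SubVert n}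

@[simp]
lemma complVert_coe (A : SubVert n) : (complVert A).1 = A.1ᶜ := rfl

lemma complVert_complVert (A : SubVert n) : complVert (complVert A) = A :=
  Subtype.ext (compl_compl A.1)

lemma complVert_injective : Function.Injective (complVert (n := n)) := fun A B h => by
  rw [← complVert_complVert A, h, complVert_complVert]

lemma not_subset_compl (A : SubVert n) : ¬A.1 ⊆ A.1ᶜ ∧ ¬A.1ᶜ ⊆ A.1 := by
  constructor <;> intro h
  · obtain ⟨a, ha⟩ := A.2.1
    exact mem_compl.mp (h ha) ha
  · obtain ⟨a, ha⟩ := (complVert A).2.1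
    exact mem_compl.mp ha (h ha)

lemma ne_complVert (A : SubVert n) : A ≠ complVert A := fun e =>
  (not_subset_compl A).1 (congrArg Subtype.val e).subset

lemma adj_iff : (inclGraph n).Adj A B ↔ A ≠ B ∧ (A.1 ⊆ B.1 ∨ B.1 ⊆ A.1) := by
  have hext : A = B ↔ A.1 = B.1 := Subtype.ext_iff
  simp only [hext, inclGraph, ssubset_iff_subset_ne, ne_eq, eq_comm (a := B.1)]
  tauto

lemma adj_complVert_complVert :
    (inclGraph n).Adj (complVert A) (complVert B) ↔ (inclGraph n).Adj A B := by
  simp only [inclGraph, complVert_coe, compl_ssubset_compl]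
  exact or_comm

lemma adj_complVert_comm :
    (inclGraph n).Adj A (complVert B) ↔ (inclGraph n).Adj B (complVert A) := by
  rw [← adj_complVert_complVert, complVert_complVert]
  exact ⟨Adj.symm, Adj.symm⟩

lemma commonNeighbors_nonempty (h : ¬A.1 ⊆ B.1 ∧ ¬B.1 ⊆ A.1) (hB : B ≠ complVert A) :
    ((inclGraph n).commonNeighbors A B).Nonempty := by
  by_cases hi : (A.1 ∩ B.1).Nonempty
  · have hu : A.1 ∩ B.1 ≠ univ := fun hu =>
      A.2.2 (univ_subset_iff.mp (hu.symm.subset.trans inter_subset_left))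
    refine ⟨⟨A.1 ∩ B.1, hi, hu⟩, (mem_commonNeighbors _).mpr ⟨Or.inr ?_, Or.inr ?_⟩⟩
    · exact inter_subset_left.ssubset_of_ne (mt inter_eq_left.mp h.1)
    · exact inter_subset_right.ssubset_of_ne (mt inter_eq_right.mp h.2)
  · have hu : A.1 ∪ B.1 ≠ univ := by
      refine fun hu => hB (Subtype.ext ?_)
      rw [complVert_coe, eq_comm, compl_eq_iff_isCompl]
      exact ⟨disjoint_iff_inter_eq_empty.mpr (not_nonempty_iff_eq_empty.mp hi),
        codisjoint_iff.mpr hu⟩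
    refine ⟨⟨A.1 ∪ B.1, A.2.1.mono subset_union_left, hu⟩,
      (mem_commonNeighbors _).mpr ⟨Or.inl ?_, Or.inl ?_⟩⟩
    · exact subset_union_left.ssubset_of_ne (mt (fun e => union_eq_left.mp e.symm) h.2)
    · exact subset_union_right.ssubset_of_ne (mt (fun e => union_eq_right.mp e.symm) h.1)

lemma dist_eq_two (h : ¬A.1 ⊆ B.1 ∧ ¬B.1 ⊆ A.1) (hB : B ≠ complVert A) :
    (inclGraph n).dist A B = 2 :=
  dist_eq_two_iff.mpr ⟨fun e => h.1 (e ▸ subset_rfl), fun hadj => by simp_all [adj_iff],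
    commonNeighbors_nonempty h hB⟩

lemma dist_le_two (hB : B ≠ complVert A) : (inclGraph n).dist A B ≤ 2 := by
  by_cases hAB : A = B
  · simp [hAB]
  by_cases hcomp : A.1 ⊆ B.1 ∨ B.1 ⊆ A.1
  · rw [dist_eq_one_iff_adj.mpr (adj_iff.mpr ⟨hAB, hcomp⟩)]
    omega
  · rw [not_or] at hcomp
    rw [dist_eq_two hcomp hB]

lemma not_subset_compl_of_adj (h : (inclGraph n).Adj A W) :
    ¬W.1 ⊆ A.1ᶜ ∧ ¬A.1ᶜ ⊆ W.1 := by
  obtain ⟨hAc, hcA⟩ := not_subset_compl A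
  rcases h with h | h
  · exact ⟨fun hW => hAc (h.subset.trans hW),
      fun hW => W.2.2 (eq_univ_of_forall fun x => by
        by_cases hx : x ∈ A.1
        exacts [h.subset hx, hW (mem_compl.mpr hx)])⟩
  · refine ⟨fun hW => ?_, fun hW => hcA (hW.trans h.subset)⟩
    obtain ⟨x, hx⟩ := W.2.1
    exact mem_compl.mp (hW hx) (h.subset hx)

lemma exists_adj_of_two_le_card (h : 2 ≤ A.1.card) : ∃ W, (inclGraph n).Adj A W := by
  obtain ⟨a, ha, b, hb, hab⟩ := one_lt_card.mp h
  have hbW : b ∉ ({a} : Finset (Fin n)) := by simpa using hab.symm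
  refine ⟨⟨{a}, singleton_nonempty a, fun hu => hbW (eq_univ_iff_forall.mp hu b)⟩,
    Or.inr ((ssubset_iff_of_subset (singleton_subset_iff.mpr ha)).mpr ⟨b, hb, hbW⟩)⟩

lemma exists_adj (hn : 3 ≤ n) (A : SubVert n) : ∃ W, (inclGraph n).Adj A W := by
  have hcard : A.1.card + A.1ᶜ.card = n := by rw [card_add_card_compl, Fintype.card_fin]
  by_cases hA : 2 ≤ A.1.card
  · exact exists_adj_of_two_le_card hA
  · obtain ⟨W, hW⟩ := exists_adj_of_two_le_card (A := complVert A) (by simp; omega)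
    exact ⟨complVert W, by rwa [← adj_complVert_complVert, complVert_complVert]⟩

lemma not_adj_of_adj_compl (hA : (inclGraph n).Adj A W) : ¬(inclGraph n).Adj (complVert A) W := by
  obtain ⟨hWc, hcW⟩ := not_subset_compl_of_adj hA
  rintro (h | h)
  exacts [hcW h.subset, hWc h.subset]

lemma dist_complVert (hn : 3 ≤ n) (A : SubVert n) : (inclGraph n).dist A (complVert A) = 3 := by
  obtain ⟨W, hAW⟩ := exists_adj hn A
  have hWc : (inclGraph n).dist W (complVert A) = 2 :=
    dist_eq_two (not_subset_compl_of_adj hAW) (complVert_injective.ne hAW.ne)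
  have hr : (inclGraph n).Reachable A (complVert A) :=
    hAW.reachable.trans (Reachable.of_dist_ne_zero (by omega))
  refine le_antisymm ?_ (hr.three_le_dist ?_ ?_ ?_)
  · have := hAW.reachable.dist_triangle_left (complVert A)
    rw [dist_eq_one_iff_adj.mpr hAW, hWc] at this
    exact this
  · exact ne_complVert A
  · exact fun hadj => (not_subset_compl_of_adj hadj).1 subset_rfl
  · refine Set.eq_empty_of_forall_notMem fun C hC => ?_
    rw [mem_commonNeighbors] at hC
    exact not_adj_of_adj_compl hC.1 hC.2

lemma dist_le_three (hn : 3 ≤ n) (A B : SubVert n) : (inclGraph n).dist A B ≤ 3 := by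
  by_cases hB : B = complVert A
  · rw [hB, dist_complVert hn]
  · exact (dist_le_two hB).trans (by omega)

lemma mmd_complVert (hn : 3 ≤ n) (A : SubVert n) : MMD (inclGraph n) A (complVert A) := by
  refine ⟨ne_complVert A, ?_, ?_⟩ <;>
    exact fun W _ => (dist_le_three hn _ _).trans (dist_complVert hn A).ge

lemma not_subset_of_mmd (h : MMD (inclGraph n) A B) : ¬A.1 ⊆ B.1 := by
  intro hsub
  have hss : A.1 ⊂ B.1 := hsub.ssubset_of_ne fun e => h.1 (Subtype.ext e)
  obtain ⟨y, hy⟩ := (complVert B).2.1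
  rw [complVert_coe, mem_compl] at hy
  obtain ⟨b, hbB, hbA⟩ := exists_of_ssubset hss
  obtain ⟨a, ha⟩ := A.2.1
  have hbW : b ∉ insert y A.1 := by
    rw [mem_insert, not_or]
    exact ⟨fun e => hy (e ▸ hbB), hbA⟩
  let W : SubVert n :=
    ⟨insert y A.1, insert_nonempty _ _, fun hu => hbW (eq_univ_iff_forall.mp hu b)⟩
  have hAW : (inclGraph n).Adj A W := Or.inl (ssubset_insert fun hyA => hy (hsub hyA))
  have hBW : (inclGraph n).dist B W = 2 := by
    refine dist_eq_two ⟨fun hBW => hbW (hBW hbB), fun hWB => hy (hWB (mem_insert_self _ _))⟩ ?_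
    intro e
    have haW : a ∈ W.1 := mem_insert_of_mem ha
    rw [e, complVert_coe, mem_compl] at haW
    exact haW (hsub ha)
  have := h.2.1 W hAW
  rw [hBW, dist_eq_one_iff_adj.mpr (Or.inl hss)] at this
  omega

lemma not_subset_compl_of_mmd (hn : 3 ≤ n) (h : MMD (inclGraph n) A B)
    (hB : B ≠ complVert A) : ¬A.1 ⊆ B.1ᶜ ∧ ¬B.1ᶜ ⊆ A.1 := by
  have hAc : ¬(inclGraph n).Adj A (complVert B) := fun hadj => by
    have := h.2.1 _ hadj
    rw [dist_complVert hn] at this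
    have := dist_le_two hB
    omega
  have hA : A ≠ complVert B := fun e => hB (by rw [e, complVert_complVert])
  rw [adj_iff, complVert_coe] at hAc
  tauto

lemma mmd_of_not_subset (h : ¬A.1 ⊆ B.1 ∧ ¬B.1 ⊆ A.1)
    (hc : ¬A.1 ⊆ B.1ᶜ ∧ ¬B.1ᶜ ⊆ A.1) :
    MMD (inclGraph n) A B := by
  have hAc : ¬(inclGraph n).Adj A (complVert B) := fun hadj => by simp_all [adj_iff]
  have hBc : ¬(inclGraph n).Adj B (complVert A) := adj_complVert_comm.not.mp hAc
  have hB : B ≠ complVert A := fun e => hc.1 (by rw [e, complVert_coe, compl_compl])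
  refine ⟨fun e => h.1 (e ▸ subset_rfl), fun W hW => ?_, fun W hW => ?_⟩ <;>
    rw [dist_eq_two h hB]
  · exact dist_le_two fun e => hAc (e ▸ hW)
  · exact dist_le_two fun e => hBc (e ▸ hW)

end inclGraph

theorem stmt9_general (n : ℕ) (hn : 3 ≤ n) (A B : SubVert n) :
    MMD (inclGraph n) A B ↔
      B = complVert A ∨
        ((¬ A.1 ⊆ B.1 ∧ ¬ B.1 ⊆ A.1) ∧ (¬ A.1 ⊆ B.1ᶜ ∧ ¬ B.1ᶜ ⊆ A.1)) := by
  by_cases hB : B = complVert A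
  · subst hB
    exact iff_of_true (inclGraph.mmd_complVert hn A) (Or.inl rfl)
  rw [or_iff_right hB]
  exact ⟨fun h => ⟨⟨inclGraph.not_subset_of_mmd h, inclGraph.not_subset_of_mmd h.symm⟩,
      inclGraph.not_subset_compl_of_mmd hn h hB⟩,
    fun h => inclGraph.mmd_of_not_subset h.1 h.2⟩

theorem stmt9 (n : ℕ) (hn : 3 ≤ n) (A B : SubVert n) (hAB : A ≠ B) :
    MMD (inclGraph n) A B ↔
      B = complVert A ∨
        ((¬ A.1 ⊆ B.1 ∧ ¬ B.1 ⊆ A.1) ∧ (¬ A.1 ⊆ B.1ᶜ ∧ ¬ B.1ᶜ ⊆ A.1)) :=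
  stmt9_general n hn A B
end
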